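/- Deterministic version of Lemma on maxima: let (z_i)_{i≥1} be a sequence of positive reals such that (1) there exists N with z_n ≤ (1+ε) max_{i ≤ n-1} z_i for all n ≥ N, and (2) max_{i ≤ n} z_i → ∞ as n → ∞. Then there exists Ñ such that for all n ≥ Ñ and all j ≤ n: max_{i ≤ n} z_i ≤ (1+ε) max_{i ∈ {1,…,n}, i ≠ j} z_i. -/

import Mathlib

/-!
Eventually the running maximum `M n = max_{1 ≤ i ≤ n} z i` is nonnegative and exceeds every
`z i` with `i < N`. Removing a term `z j` that is not the maximum leaves `M n` unchanged.
If `z j = M n`, then `j ≥ N`, so `z j ≤ (1 + ε) M (j - 1)`, and all the terms of `M (j - 1)` survive the removal.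
-/

open Filter

namespace Finset

variable {ι α : Type*}

theorem ciSup_subtype_eq_sup' [ConditionallyCompleteLattice α] (s : Finset ι) (hs : s.Nonempty)
    (f : ι → α) : ⨆ i : s, f i = s.sup' hs f := by
  rw [sup'_eq_csSup_image, iSup, Set.range_comp' f Subtype.val, Subtype.range_coe]

theorem sup'_eq_sup_sup'_erase [SemilatticeSup α] [DecidableEq ι] {s : Finset ι} {j : ι}
    (hj : j ∈ s) (hne : (s.erase j).Nonempty) (f : ι → α) :
    s.sup' ⟨j, hj⟩ f = f j ⊔ (s.erase j).sup' hne f := by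
  rw [← sup'_insert, sup'_congr _ (insert_erase hj) fun _ _ => rfl]

theorem sup'_le_mul_sup'_erase [DecidableEq ι] {s : Finset ι} {j : ι} {f : ι → ℝ} {c : ℝ}
    (hc : 1 ≤ c) (hj : j ∈ s) (hne : (s.erase j).Nonempty) (hnonneg : 0 ≤ s.sup' ⟨j, hj⟩ f)
    (hrecord : s.sup' ⟨j, hj⟩ f = f j → f j ≤ c * (s.erase j).sup' hne f) :
    s.sup' ⟨j, hj⟩ f ≤ c * (s.erase j).sup' hne f := by
  rw [sup'_eq_sup_sup'_erase hj hne] at hnonneg hrecord ⊢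
  rcases le_total (f j) ((s.erase j).sup' hne f) with hle | hlt
  · rw [sup_eq_right.2 hle] at hnonneg ⊢
    exact le_mul_of_one_le_left hnonneg hc
  · rw [sup_eq_left.2 hlt] at hrecord ⊢
    exact hrecord rfl

end Finset

open Finset in
theorem no_single_essential_term_det_general
    (z : ℕ → ℝ) (ε : ℝ) (hε : 0 < ε)
    (h1 : ∃ N, 2 ≤ N ∧ ∀ n ≥ N,
        z n ≤ (1 + ε) * ⨆ i : Finset.Icc 1 (n - 1), z i)
    (h2 : Tendsto (fun n => ⨆ i : Finset.Icc 1 n, z i) atTop atTop) :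
    ∃ N, ∀ n ≥ N, ∀ j ∈ Finset.Icc 1 n,
        (⨆ i : Finset.Icc 1 n, z i) ≤
          (1 + ε) * ⨆ i : (Finset.Icc 1 n).erase j, z i := by
  obtain ⟨N, hN, hgrowth⟩ := h1
  obtain ⟨n₀, hn₀⟩ := eventually_atTop.1 <|
    ((h2.eventually_gt_atTop (⨆ i : Icc 1 (N - 1), z i)).and (h2.eventually_ge_atTop 0)).and
      (eventually_ge_atTop N)
  refine ⟨n₀, fun n hn j hj => ?_⟩
  obtain ⟨⟨hlarge, hnonneg⟩, hnN⟩ := hn₀ n hn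
  have hne : ((Icc 1 n).erase j).Nonempty :=
    card_pos.1 (by rw [card_erase_of_mem hj, Nat.card_Icc]; omega)
  have hs : (Icc 1 n).Nonempty := ⟨j, hj⟩
  rw [ciSup_subtype_eq_sup' _ hs] at hlarge hnonneg ⊢
  rw [ciSup_subtype_eq_sup' _ (nonempty_Icc.2 (by omega))] at hlarge
  rw [ciSup_subtype_eq_sup' _ hne]
  refine sup'_le_mul_sup'_erase (by linarith) hj hne hnonneg fun hrecord => ?_
  have hjN : N ≤ j := by
    by_contra! hjN
    have : z j ≤ (Icc 1 (N - 1)).sup' _ z := le_sup' z (by simp only [mem_Icc] at hj ⊢; omega)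
    linarith
  have hsub : Icc 1 (j - 1) ⊆ (Icc 1 n).erase j := fun i hi => by
    simp only [mem_Icc, mem_erase] at hi hj ⊢; omega
  calc z j ≤ (1 + ε) * ⨆ i : Icc 1 (j - 1), z i := hgrowth j hjN
    _ = (1 + ε) * (Icc 1 (j - 1)).sup' (nonempty_Icc.2 (by omega)) z := by
      rw [ciSup_subtype_eq_sup']
    _ ≤ (1 + ε) * ((Icc 1 n).erase j).sup' hne z :=
      mul_le_mul_of_nonneg_left (sup'_mono z hsub _) (by linarith)

theorem no_single_essential_term_det
    (z : ℕ → ℝ) (hpos : ∀ i, 0 < z i) (ε : ℝ) (hε : 0 < ε)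
    (h1 : ∃ N, 2 ≤ N ∧ ∀ n ≥ N,
        z n ≤ (1 + ε) * ⨆ i : Finset.Icc 1 (n - 1), z i)
    (h2 : Tendsto (fun n => ⨆ i : Finset.Icc 1 n, z i) atTop atTop) :
    ∃ N, ∀ n ≥ N, ∀ j ∈ Finset.Icc 1 n,
        (⨆ i : Finset.Icc 1 n, z i) ≤
          (1 + ε) * ⨆ i : (Finset.Icc 1 n).erase j, z i :=
  no_single_essential_term_det_general z ε hε h1 h2
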